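/- arXiv:1304.3042 — 2 statements merged into one kernel-verified Lean document; each statement's English description precedes it below -/
import Mathlib

section
/- Assume I = [a,b]. A function f : Iⁿ → I is a Sugeno integral if and only if f(e_∅) = a, f(e_X) = b, and f(x) = ⋁_{S⊆X} ( f(e_S) ∧ ⋀_{i∈S} x_i ) for every x ∈ Iⁿ (with the convention ⋀_{i∈∅} x_i = b). -/
/-- `S↑_σ(i)` (0-indexed): the set `{σ(i), σ(i+1), …, σ(n-1)}`.  For `i = n` it is empty. -/
def SUp {n : ℕ} (σ : Equiv.Perm (Fin n)) (i : ℕ) : Finset (Fin n) :=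
  (Finset.univ.filter (fun j : Fin n => i ≤ (j : ℕ))).image σ

/-- `S↓_σ(i)`: the set `{σ(0), …, σ(i-1)}`.  For `i = 0` it is empty. -/
def SDown {n : ℕ} (σ : Equiv.Perm (Fin n)) (i : ℕ) : Finset (Fin n) :=
  (Finset.univ.filter (fun j : Fin n => (j : ℕ) < i)).image σ

/-- Two tuples are comonotonic if some permutation sorts both nondecreasingly. -/
def Comonotone {n : ℕ} (x y : Fin n → ℝ) : Prop :=
  ∃ σ : Equiv.Perm (Fin n), Monotone (x ∘ σ) ∧ Monotone (y ∘ σ)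

/-- The tuple `r·1_S`. -/
def indTuple {n : ℕ} (S : Finset (Fin n)) (r : ℝ) : Fin n → ℝ :=
  fun j => if j ∈ S then r else 0

/-- The signed Choquet integral of `x` w.r.t. `v`, computed via a sorting permutation. -/
noncomputable def Cv {n : ℕ} (v : Finset (Fin n) → ℝ) (x : Fin n → ℝ) : ℝ :=
  ∑ i : Fin n,
    x (Tuple.sort x i) *
      (v (SUp (Tuple.sort x) (i : ℕ)) - v (SUp (Tuple.sort x) ((i : ℕ) + 1)))

/-- `f` is the restriction to `Iⁿ` of a signed Choquet integral. -/
def IsSignedChoquetOn {n : ℕ} (I : Set ℝ) (f : (Fin n → ℝ) → ℝ) : Prop :=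
  ∃ v : Finset (Fin n) → ℝ, v ∅ = 0 ∧
    ∀ σ : Equiv.Perm (Fin n), ∀ x : Fin n → ℝ, (∀ i, x i ∈ I) → Monotone (x ∘ σ) →
      f x = ∑ i : Fin n, x (σ i) * (v (SUp σ (i : ℕ)) - v (SUp σ ((i : ℕ) + 1)))

/-- `f` is the restriction to `Iⁿ` of a symmetric signed Choquet integral
`Č_v(x) = C_v(x⁺) - C_v(x⁻)`. -/
def IsSymSignedChoquetOn {n : ℕ} (I : Set ℝ) (f : (Fin n → ℝ) → ℝ) : Prop :=
  ∃ v : Finset (Fin n) → ℝ, v ∅ = 0 ∧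
    ∀ x : Fin n → ℝ, (∀ i, x i ∈ I) →
      f x = Cv v (fun i => max (x i) 0) - Cv v (fun i => max (-x i) 0)

/-- Comonotonic modularity (on tuples with entries in `D`). -/
def ComonModularOn {n : ℕ} (D : Set ℝ) (f : (Fin n → ℝ) → ℝ) : Prop :=
  ∀ x y : Fin n → ℝ, (∀ i, x i ∈ D) → (∀ i, y i ∈ D) → Comonotone x y →
    f x + f y = f (fun i => min (x i) (y i)) + f (fun i => max (x i) (y i))

/-- Comonotonic additivity (on tuples with entries in `D`). -/
def ComonAdditiveOn {n : ℕ} (D : Set ℝ) (f : (Fin n → ℝ) → ℝ) : Prop :=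
  ∀ x y : Fin n → ℝ, (∀ i, x i ∈ D) → (∀ i, y i ∈ D) → Comonotone x y →
    (∀ i, x i + y i ∈ D) → f (fun i => x i + y i) = f x + f y

/-- Comonotonic maxitivity. -/
def ComonMaxitiveOn {n : ℕ} (D : Set ℝ) (f : (Fin n → ℝ) → ℝ) : Prop :=
  ∀ x y : Fin n → ℝ, (∀ i, x i ∈ D) → (∀ i, y i ∈ D) → Comonotone x y →
    f (fun i => max (x i) (y i)) = max (f x) (f y)

/-- Comonotonic minitivity. -/
def ComonMinitiveOn {n : ℕ} (D : Set ℝ) (f : (Fin n → ℝ) → ℝ) : Prop :=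
  ∀ x y : Fin n → ℝ, (∀ i, x i ∈ D) → (∀ i, y i ∈ D) → Comonotone x y →
    f (fun i => min (x i) (y i)) = min (f x) (f y)

/-- Horizontal min-additivity. -/
def HorizMinAdditiveOn {n : ℕ} (D : Set ℝ) (f : (Fin n → ℝ) → ℝ) : Prop :=
  ∀ x : Fin n → ℝ, (∀ i, x i ∈ D) → ∀ c ∈ D, (∀ i, x i - min (x i) c ∈ D) →
    f x = f (fun i => min (x i) c) + f (fun i => x i - min (x i) c)

/-- Horizontal max-additivity. -/
def HorizMaxAdditiveOn {n : ℕ} (D : Set ℝ) (f : (Fin n → ℝ) → ℝ) : Prop :=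
  ∀ x : Fin n → ℝ, (∀ i, x i ∈ D) → ∀ c ∈ D, (∀ i, x i - max (x i) c ∈ D) →
    f x = f (fun i => max (x i) c) + f (fun i => x i - max (x i) c)

/-- Horizontal median-additivity (for `I` centered at `0`). -/
def HorizMedAdditiveOn {n : ℕ} (I : Set ℝ) (f : (Fin n → ℝ) → ℝ) : Prop :=
  ∀ x : Fin n → ℝ, (∀ i, x i ∈ I) → ∀ c ∈ I, 0 ≤ c →
    f x = f (fun i => max (-c) (min (x i) c)) + f (fun i => x i - min (x i) c)
        + f (fun i => x i - max (x i) (-c))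

/-- Invariance under horizontal min-differences (for domains of nonnegative tuples). -/
def InvHMinDiffOn {n : ℕ} (D : Set ℝ) (f : (Fin n → ℝ) → ℝ) : Prop :=
  ∀ x : Fin n → ℝ, (∀ i, x i ∈ D) → ∀ c ∈ D,
    f x - f (fun i => min (x i) c) =
      f (fun i => if x i ≤ c then 0 else x i) -
        f (fun i => min (if x i ≤ c then 0 else x i) c)

/-- Invariance under horizontal max-differences (for domains of nonpositive tuples). -/
def InvHMaxDiffOn {n : ℕ} (D : Set ℝ) (f : (Fin n → ℝ) → ℝ) : Prop :=
  ∀ x : Fin n → ℝ, (∀ i, x i ∈ D) → ∀ c ∈ D,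
    f x - f (fun i => max (x i) c) =
      f (fun i => if c ≤ x i then 0 else x i) -
        f (fun i => max (if c ≤ x i then 0 else x i) c)

/-- `⋀_{i ∈ S} x i`, with the convention that the empty infimum is `b`. -/
noncomputable def infWith {n : ℕ} (b : ℝ) (S : Finset (Fin n)) (x : Fin n → ℝ) : ℝ :=
  if h : S.Nonempty then S.inf' h x else b

/-- An `[a,b]`-valued capacity. -/
def IsCapacityOn {n : ℕ} (a b : ℝ) (μ : Finset (Fin n) → ℝ) : Prop :=
  μ ∅ = a ∧ μ Finset.univ = b ∧ ∀ S T : Finset (Fin n), S ⊆ T → μ S ≤ μ T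

/-- `f` is nondecreasing (in each argument) on tuples with entries in `D`. -/
def NondecreasingOn {n : ℕ} (D : Set ℝ) (f : (Fin n → ℝ) → ℝ) : Prop :=
  ∀ x y : Fin n → ℝ, (∀ i, x i ∈ D) → (∀ i, y i ∈ D) → (∀ i, x i ≤ y i) → f x ≤ f y

/-!
For `x` sorted by `σ`, the `i`-th term `x_{σ(i)} ∧ μ(S↑_σ(i))` of the Sugeno integral is dominated
by the term of `S↑_σ(i)` in the lattice polynomial `⋁_S (μ S ∧ ⋀_{j∈S} x_j)`, as `x_{σ(i)}` is the
least entry of `x` on `S↑_σ(i)`; conversely a nonempty `S` lies in `S↑_σ(i)` for its `σ`-least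
element `σ(i)`, so its term is dominated by the `i`-th one. Hence `S_μ` is that lattice polynomial,
whose value at `e_S` is `μ S`. In the other direction, `S ↦ f(e_S)` is a capacity because lattice
polynomials are monotone.
-/

open Finset

section Lemmas

variable {n : ℕ}

def cornerTuple (a b : ℝ) (S : Finset (Fin n)) : Fin n → ℝ :=
  fun i => if i ∈ S then b else a

noncomputable def latticePoly (b : ℝ) (μ : Finset (Fin n) → ℝ) (x : Fin n → ℝ) : ℝ :=
  univ.sup' univ_nonempty fun S => min (μ S) (infWith b S x)

lemma mem_SUp (σ : Equiv.Perm (Fin n)) (i : ℕ) (j : Fin n) :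
    j ∈ SUp σ i ↔ i ≤ (σ.symm j : ℕ) := by
  simp only [SUp, mem_image, mem_filter, mem_univ, true_and]
  constructor
  · rintro ⟨k, hk, rfl⟩
    simpa using hk
  · exact fun h => ⟨σ.symm j, h, σ.apply_symm_apply j⟩

lemma exists_mem_subset_SUp (σ : Equiv.Perm (Fin n)) {S : Finset (Fin n)} (hS : S.Nonempty) :
    ∃ i, σ i ∈ S ∧ S ⊆ SUp σ i := by
  obtain ⟨s, hs, hmin⟩ := S.exists_min_image σ.symm hS
  exact ⟨σ.symm s, by simpa using hs, fun t ht => (mem_SUp σ _ t).2 (hmin t ht)⟩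

lemma infWith_le {b : ℝ} {S : Finset (Fin n)} {j : Fin n} (hj : j ∈ S) (x : Fin n → ℝ) :
    infWith b S x ≤ x j := by
  rw [infWith, dif_pos ⟨j, hj⟩]
  exact inf'_le x hj

lemma le_infWith {b c : ℝ} {S : Finset (Fin n)} {x : Fin n → ℝ} (hS : S.Nonempty)
    (hcx : ∀ j ∈ S, c ≤ x j) : c ≤ infWith b S x := by
  rw [infWith, dif_pos hS]
  exact le_inf' hS x hcx

@[simp]
lemma infWith_empty (b : ℝ) (x : Fin n → ℝ) : infWith b ∅ x = b := by
  simp [infWith]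

lemma infWith_mono (b : ℝ) (S : Finset (Fin n)) : Monotone (infWith b S) := by
  intro x y hxy
  unfold infWith
  split_ifs with hS
  exacts [inf'_mono_fun (fun j _ => hxy j), le_rfl]

lemma latticePoly_mono (b : ℝ) (μ : Finset (Fin n) → ℝ) : Monotone (latticePoly b μ) :=
  fun _ _ hxy => sup'_mono_fun fun S _ => min_le_min_left _ (infWith_mono b S hxy)

lemma latticePoly_congr {b : ℝ} {μ ν : Finset (Fin n) → ℝ} (h : ∀ S, μ S = ν S)
    (x : Fin n → ℝ) : latticePoly b μ x = latticePoly b ν x := by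
  simp only [latticePoly, h]

theorem sup'_min_SUp_eq_latticePoly (hn : 0 < n) (b : ℝ) {μ : Finset (Fin n) → ℝ}
    (hμ : Monotone μ) (σ : Equiv.Perm (Fin n)) {x : Fin n → ℝ} (hsort : Monotone (x ∘ σ))
    (hx : ∀ i, μ ∅ ≤ x i) :
    univ.sup' ⟨⟨0, hn⟩, mem_univ _⟩ (fun i : Fin n => min (x (σ i)) (μ (SUp σ (i : ℕ))))
      = latticePoly b μ x := by
  apply le_antisymm
  · refine sup'_le _ _ fun i _ => le_sup'_of_le _ (mem_univ (SUp σ i)) ?_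
    refine le_min (min_le_right _ _) (le_infWith ⟨σ i, by simp [mem_SUp]⟩ fun j hj => ?_)
    refine (min_le_left _ _).trans ?_
    simpa using hsort ((mem_SUp σ i j).1 hj : i ≤ σ.symm j)
  · refine sup'_le _ _ fun S _ => ?_
    rcases S.eq_empty_or_nonempty with rfl | hS
    · refine le_sup'_of_le _ (mem_univ ⟨0, hn⟩) (le_min ((min_le_left _ _).trans (hx _)) ?_)
      exact (min_le_left _ _).trans (hμ (empty_subset _))
    · obtain ⟨i, hiS, hSi⟩ := exists_mem_subset_SUp σ hS
      refine le_sup'_of_le _ (mem_univ i) ?_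
      rw [min_comm]
      exact min_le_min (infWith_le hiS x) (hμ hSi)

section Capacity

variable {a b : ℝ} {μ : Finset (Fin n) → ℝ}

lemma IsCapacityOn.monotone (hμ : IsCapacityOn a b μ) : Monotone μ :=
  fun S T => hμ.2.2 S T

lemma IsCapacityOn.le_apply (hμ : IsCapacityOn a b μ) (S : Finset (Fin n)) : a ≤ μ S :=
  hμ.1 ▸ hμ.monotone (empty_subset S)

lemma IsCapacityOn.apply_le (hμ : IsCapacityOn a b μ) (S : Finset (Fin n)) : μ S ≤ b :=
  hμ.2.1 ▸ hμ.monotone (subset_univ S)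

lemma cornerTuple_mem_Icc (hab : a ≤ b) (S : Finset (Fin n)) (i : Fin n) :
    cornerTuple a b S i ∈ Set.Icc a b := by
  unfold cornerTuple
  split_ifs <;> simp [hab]

lemma cornerTuple_mono (hab : a ≤ b) : Monotone (cornerTuple (n := n) a b) := by
  intro S T hST i
  by_cases hS : i ∈ S
  · simp [cornerTuple, hS, hST hS]
  · by_cases hT : i ∈ T <;> simp [cornerTuple, hS, hT, hab]

@[simp]
lemma cornerTuple_empty : cornerTuple (n := n) a b ∅ = fun _ => a := by
  ext; simp [cornerTuple]

@[simp]
lemma cornerTuple_univ : cornerTuple (n := n) a b univ = fun _ => b := by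
  ext; simp [cornerTuple]

lemma latticePoly_cornerTuple (hμ : IsCapacityOn a b μ) (S : Finset (Fin n)) :
    latticePoly b μ (cornerTuple a b S) = μ S := by
  apply le_antisymm
  · refine sup'_le _ _ fun T _ => ?_
    by_cases hTS : T ⊆ S
    · exact (min_le_left _ _).trans (hμ.monotone hTS)
    · obtain ⟨t, htT, htS⟩ := not_subset.1 hTS
      refine (min_le_right _ _).trans ((infWith_le htT _).trans ?_)
      simpa [cornerTuple, htS] using hμ.le_apply S
  · refine le_sup'_of_le _ (mem_univ S) (le_min le_rfl ?_)
    rcases S.eq_empty_or_nonempty with rfl | hS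
    · simpa using hμ.apply_le ∅
    · exact le_infWith hS fun j hj => by simpa [cornerTuple, hj] using hμ.apply_le S

end Capacity

end Lemmas

theorem statement17_general (n : ℕ) (hn : 0 < n) (a b : ℝ) (hab : a < b)
    (f : (Fin n → ℝ) → ℝ) :
    (∃ μ : Finset (Fin n) → ℝ, IsCapacityOn a b μ ∧
      ∀ σ : Equiv.Perm (Fin n), ∀ x : Fin n → ℝ,
        (∀ i, x i ∈ Set.Icc a b) → Monotone (x ∘ σ) →
        f x = Finset.sup' Finset.univ ⟨⟨0, hn⟩, Finset.mem_univ _⟩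
          (fun i : Fin n => min (x (σ i)) (μ (SUp σ (i : ℕ)))))
    ↔
    (f (fun _ => a) = a ∧ f (fun _ => b) = b ∧
      ∀ x : Fin n → ℝ, (∀ i, x i ∈ Set.Icc a b) →
        f x = Finset.sup' Finset.univ ⟨∅, Finset.mem_univ ∅⟩
          (fun S : Finset (Fin n) =>
            min (f (fun i => if i ∈ S then b else a)) (infWith b S x))) := by
  constructor
  · rintro ⟨μ, hμ, hsugeno⟩
    have hpoly (x : Fin n → ℝ) (hx : ∀ i, x i ∈ Set.Icc a b) : f x = latticePoly b μ x :=
      (hsugeno _ x hx (Tuple.monotone_sort x)).trans <|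
        sup'_min_SUp_eq_latticePoly hn b hμ.monotone _ (Tuple.monotone_sort x)
          fun i => hμ.1.trans_le (hx i).1
    have hcorner (S : Finset (Fin n)) : f (cornerTuple a b S) = μ S :=
      (hpoly _ (cornerTuple_mem_Icc hab.le S)).trans (latticePoly_cornerTuple hμ S)
    refine ⟨by simpa [hμ.1] using hcorner ∅,
      by simpa [hμ.2.1] using hcorner univ, fun x hx => ?_⟩
    exact (hpoly x hx).trans (latticePoly_congr (fun S => (hcorner S).symm) x)
  · rintro ⟨ha, hb, hpoly⟩
    have hμ : IsCapacityOn a b fun S => f (cornerTuple a b S) :=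
      ⟨by simpa using ha, by simpa using hb, fun S T hST =>
        (hpoly _ (cornerTuple_mem_Icc hab.le S)).trans_le <|
          (latticePoly_mono _ _ (cornerTuple_mono hab.le hST)).trans_eq
            (hpoly _ (cornerTuple_mem_Icc hab.le T)).symm⟩
    exact ⟨_, hμ, fun σ x hx hsort => (hpoly x hx).trans
      (sup'_min_SUp_eq_latticePoly hn b hμ.monotone σ hsort fun i => hμ.1.trans_le (hx i).1).symm⟩

theorem statement17 (n : ℕ) (hn : 0 < n) (a b : ℝ) (hab : a < b)
    (f : (Fin n → ℝ) → ℝ)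
    (hfI : ∀ x : Fin n → ℝ, (∀ i, x i ∈ Set.Icc a b) → f x ∈ Set.Icc a b) :
    (∃ μ : Finset (Fin n) → ℝ, IsCapacityOn a b μ ∧
      ∀ σ : Equiv.Perm (Fin n), ∀ x : Fin n → ℝ,
        (∀ i, x i ∈ Set.Icc a b) → Monotone (x ∘ σ) →
        f x = Finset.sup' Finset.univ ⟨⟨0, hn⟩, Finset.mem_univ _⟩
          (fun i : Fin n => min (x (σ i)) (μ (SUp σ (i : ℕ)))))
    ↔
    (f (fun _ => a) = a ∧ f (fun _ => b) = b ∧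
      ∀ x : Fin n → ℝ, (∀ i, x i ∈ Set.Icc a b) →
        f x = Finset.sup' Finset.univ ⟨∅, Finset.mem_univ ∅⟩
          (fun S : Finset (Fin n) =>
            min (f (fun i => if i ∈ S then b else a)) (infWith b S x))) :=
  statement17_general n hn a b hab f
end

section
/- Let I = [a,b] and J = [c,d] be closed bounded real intervals and f : Jⁿ → I a function. The following are equivalent: (i) f is a quasi-Sugeno integral of the form f(x) = S_μ(φ(x₁),…,φ(xₙ)) with φ(x) = f(x,…,x); (ii) f is a quasi-Sugeno integral; (iii) f is comonotonically modular, nondecreasing, and satisfies f(x ∨ e_S) = f(x,…,x) ∨ f(e_S) for all x ∈ J and S ⊆ X, or satisfies f(x ∧ e_S) = f(x,…,x) ∧ f(e_S) for all x ∈ J and S ⊆ X; (iv) f is nondecreasing and satisfies both f(x ∨ e_S) = f(x,…,x) ∨ f(e_S) and f(x ∧ e_S) = f(x,…,x) ∧ f(e_S) for all x ∈ J and S ⊆ X. -/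
/-!
Along a permutation `σ` sorting `x`, a quasi-Sugeno integral is the lattice expression
`⋁ᵢ φ(x_{σ(i)}) ∧ μ(S↑_σ(i))`. Comonotone tuples share `σ`, so the integral is comonotonically
maxitive and minitive (hence modular, and compatible with `∨ e_S`, `∧ e_S`), and its
permutation-free form `⋁_S μ(S) ∧ ⋀_{i ∈ S} φ(xᵢ)` shows that it is nondecreasing.
Conversely, when `f` is nondecreasing and compatible with both `∨ e_S` and `∧ e_S`, the capacity
`μ(S) = f(e_S)` (reset to `a`, `b` at `∅`, `X`) represents `f`. Comonotone modularity,
via `min + max = +`, turns either compatibility into the other.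
-/

namespace QuasiSugeno

variable {n : ℕ}

section Positions

variable {σ : Equiv.Perm (Fin n)}

lemma mem_SUp {i : ℕ} {j : Fin n} : j ∈ SUp σ i ↔ i ≤ (σ.symm j : ℕ) := by
  simp only [SUp, Finset.mem_image, Finset.mem_filter, Finset.mem_univ, true_and]
  constructor
  · rintro ⟨l, hl, rfl⟩
    simpa using hl
  · exact fun h => ⟨σ.symm j, h, σ.apply_symm_apply j⟩

lemma apply_mem_SUp (i : Fin n) : σ i ∈ SUp σ i := by
  simp [mem_SUp]

lemma apply_notMem_SUp_succ (i : Fin n) : σ i ∉ SUp σ ((i : ℕ) + 1) := by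
  simp [mem_SUp]

lemma SUp_zero : SUp σ 0 = Finset.univ := by
  ext j
  simp [mem_SUp]

lemma SUp_self : SUp σ n = ∅ := by
  ext j
  simp [mem_SUp]

lemma exists_mem_subset_SUp {S : Finset (Fin n)} (hS : S.Nonempty) :
    ∃ i : Fin n, σ i ∈ S ∧ S ⊆ SUp σ i := by
  have hT : (S.image σ.symm).Nonempty := hS.image _
  obtain ⟨s, hs, hsi⟩ := Finset.mem_image.1 ((S.image σ.symm).min'_mem hT)
  refine ⟨(S.image σ.symm).min' hT, by rwa [← hsi, Equiv.apply_symm_apply], fun j hj => ?_⟩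
  rw [mem_SUp]
  exact_mod_cast Finset.min'_le _ _ (Finset.mem_image_of_mem _ hj)

variable {α : Type*} [Preorder α] {u : Fin n → α}

lemma le_of_mem_SUp (hu : Monotone (u ∘ σ)) {i : Fin n} {j : Fin n} (hj : j ∈ SUp σ i) :
    u (σ i) ≤ u j := by
  simpa using hu (show i ≤ σ.symm j from mem_SUp.1 hj)

lemma le_of_notMem_SUp_succ (hu : Monotone (u ∘ σ)) {i : Fin n} {j : Fin n}
    (hj : j ∉ SUp σ ((i : ℕ) + 1)) : u j ≤ u (σ i) := by
  rw [mem_SUp, not_le, Nat.lt_succ_iff] at hj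
  simpa using hu (show σ.symm j ≤ i from hj)

end Positions

theorem exists_max_le_max_of_min_le {α : Type*} [LinearOrder α] (hn : 0 < n) (A : Fin n → α)
    (B : ℕ → α) (m : α) (h0 : A ⟨0, hn⟩ ≤ B 0) (hm : ∀ i, min (A i) (B i) ≤ m) :
    ∃ i : Fin n, max (A i) (B ((i : ℕ) + 1)) ≤ max m (B n) := by
  suffices h : ∀ k (hk : k < n), ∃ i : Fin n, max (A i) (B ((i : ℕ) + 1)) ≤ max m (B (k + 1)) by
    obtain ⟨k, rfl⟩ := Nat.exists_eq_add_one_of_ne_zero hn.ne'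
    exact h k k.lt_add_one
  intro k hk
  induction k with
  | zero => exact ⟨⟨0, hk⟩, max_le_max ((min_eq_left h0).symm.trans_le (hm _)) le_rfl⟩
  | succ k ih =>
    by_cases hAB : A ⟨k + 1, hk⟩ ≤ B (k + 1)
    · exact ⟨⟨k + 1, hk⟩, max_le_max ((min_eq_left hAB).symm.trans_le (hm _)) le_rfl⟩
    · obtain ⟨i, hi⟩ := ih (by omega)
      have hBm : B (k + 1) ≤ m := (min_eq_right (le_of_not_ge hAB)).symm.trans_le (hm _)
      exact ⟨i, hi.trans (max_le (le_max_left _ _) (hBm.trans (le_max_left _ _)))⟩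

section Sugeno

variable (hn : 0 < n)

noncomputable def sortedSugeno (μ : Finset (Fin n) → ℝ) (σ : Equiv.Perm (Fin n))
    (u : Fin n → ℝ) : ℝ :=
  Finset.univ.sup' ⟨⟨0, hn⟩, Finset.mem_univ _⟩ fun i : Fin n => min (u (σ i)) (μ (SUp σ i))

/-- The permutation-free form of the Sugeno integral. -/
noncomputable def sugeno (b : ℝ) (μ : Finset (Fin n) → ℝ) (u : Fin n → ℝ) : ℝ :=
  Finset.univ.sup' Finset.univ_nonempty fun S => min (μ S) (infWith b S u)

variable {a b : ℝ} {μ : Finset (Fin n) → ℝ} {σ : Equiv.Perm (Fin n)} {u v : Fin n → ℝ}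

lemma le_sortedSugeno (i : Fin n) : min (u (σ i)) (μ (SUp σ i)) ≤ sortedSugeno hn μ σ u :=
  Finset.le_sup' (fun i : Fin n => min (u (σ i)) (μ (SUp σ i))) (Finset.mem_univ i)

lemma sortedSugeno_le {t : ℝ} (h : ∀ i : Fin n, min (u (σ i)) (μ (SUp σ i)) ≤ t) :
    sortedSugeno hn μ σ u ≤ t :=
  Finset.sup'_le _ _ fun i _ => h i

lemma le_sugeno (S : Finset (Fin n)) : min (μ S) (infWith b S u) ≤ sugeno b μ u :=
  Finset.le_sup' (fun S => min (μ S) (infWith b S u)) (Finset.mem_univ S)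

lemma sugeno_le {t : ℝ} (h : ∀ S : Finset (Fin n), min (μ S) (infWith b S u) ≤ t) :
    sugeno b μ u ≤ t :=
  Finset.sup'_le _ _ fun S _ => h S

lemma infWith_mono {S : Finset (Fin n)} (huv : ∀ i, u i ≤ v i) :
    infWith b S u ≤ infWith b S v := by
  unfold infWith
  split_ifs with hS
  · exact Finset.le_inf' _ _ fun j hj => (Finset.inf'_le _ hj).trans (huv j)
  · exact le_rfl

lemma sugeno_mono (huv : ∀ i, u i ≤ v i) : sugeno b μ u ≤ sugeno b μ v :=
  sugeno_le fun S => (min_le_min le_rfl (infWith_mono huv)).trans (le_sugeno S)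

lemma sortedSugeno_mono (huv : ∀ i, u i ≤ v i) :
    sortedSugeno hn μ σ u ≤ sortedSugeno hn μ σ v :=
  sortedSugeno_le hn fun i => (min_le_min (huv _) le_rfl).trans (le_sortedSugeno hn i)

lemma sortedSugeno_const (hμ : μ Finset.univ = b) {t : ℝ} (ht : t ≤ b) :
    sortedSugeno hn μ σ (fun _ => t) = t := by
  refine le_antisymm (sortedSugeno_le hn fun i => min_le_left _ _) ?_
  refine le_trans ?_ (le_sortedSugeno hn ⟨0, hn⟩)
  simp [SUp_zero, hμ, ht]

lemma sortedSugeno_eq_sugeno (hμ : IsCapacityOn a b μ) (ha : ∀ i, a ≤ u i)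
    (hu : Monotone (u ∘ σ)) : sortedSugeno hn μ σ u = sugeno b μ u := by
  obtain ⟨hμ0, hμu, hμm⟩ := hμ
  refine le_antisymm (sortedSugeno_le hn fun i => ?_) (sugeno_le fun S => ?_)
  · have hinf : u (σ i) ≤ infWith b (SUp σ i) u := by
      rw [infWith, dif_pos ⟨σ i, apply_mem_SUp i⟩]
      exact Finset.le_inf' _ _ fun j hj => le_of_mem_SUp hu hj
    exact (min_comm (μ _) _ ▸ min_le_min le_rfl hinf).trans (le_sugeno _)
  · rcases S.eq_empty_or_nonempty with rfl | hS
    · have hab : a ≤ b := hμ0 ▸ hμu ▸ hμm _ _ (Finset.empty_subset _)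
      refine le_trans ?_ (le_sortedSugeno hn ⟨0, hn⟩)
      simpa [infWith, hμ0, SUp_zero, hμu, hab] using ha _
    · obtain ⟨i, hiS, hSi⟩ := exists_mem_subset_SUp (σ := σ) hS
      refine le_trans ?_ (le_sortedSugeno hn i)
      rw [infWith, dif_pos hS, min_comm]
      exact min_le_min (Finset.inf'_le _ hiS) (hμm _ _ hSi)

lemma sortedSugeno_max :
    sortedSugeno hn μ σ (fun i => max (u i) (v i)) =
      max (sortedSugeno hn μ σ u) (sortedSugeno hn μ σ v) := by
  refine le_antisymm (sortedSugeno_le hn fun i => ?_)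
    (max_le (sortedSugeno_mono hn fun _ => le_max_left _ _)
      (sortedSugeno_mono hn fun _ => le_max_right _ _))
  rw [min_max_distrib_right]
  exact max_le_max (le_sortedSugeno hn i) (le_sortedSugeno hn i)

lemma sortedSugeno_min (hu : Monotone (u ∘ σ)) (hv : Monotone (v ∘ σ)) :
    sortedSugeno hn μ σ (fun i => min (u i) (v i)) =
      min (sortedSugeno hn μ σ u) (sortedSugeno hn μ σ v) := by
  refine le_antisymm (le_min (sortedSugeno_mono hn fun _ => min_le_left _ _)
    (sortedSugeno_mono hn fun _ => min_le_right _ _)) ?_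
  -- both suprema are attained; the term at the larger of the two indices dominates their meet
  have key : ∀ {g h : Fin n → ℝ}, Monotone (g ∘ σ) → ∀ {i j : Fin n}, i ≤ j →
      min (min (g (σ i)) (μ (SUp σ i))) (min (h (σ j)) (μ (SUp σ j))) ≤
        min (min (g (σ j)) (h (σ j))) (μ (SUp σ j)) := fun hg i j hij =>
    le_min (le_min ((min_le_left _ _).trans ((min_le_left _ _).trans (hg hij)))
      ((min_le_right _ _).trans (min_le_left _ _))) ((min_le_right _ _).trans (min_le_right _ _))
  obtain ⟨i, -, hi⟩ := Finset.exists_mem_eq_sup' ⟨⟨0, hn⟩, Finset.mem_univ _⟩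
    fun i : Fin n => min (u (σ i)) (μ (SUp σ i))
  obtain ⟨j, -, hj⟩ := Finset.exists_mem_eq_sup' ⟨⟨0, hn⟩, Finset.mem_univ _⟩
    fun i : Fin n => min (v (σ i)) (μ (SUp σ i))
  rw [show sortedSugeno hn μ σ u = _ from hi, show sortedSugeno hn μ σ v = _ from hj]
  rcases le_total i j with hij | hji
  · exact (key hu hij).trans (le_sortedSugeno hn (u := fun i => min (u i) (v i)) j)
  · refine min_comm (min (u (σ i)) _) _ ▸ (key hv hji).trans ?_
    rw [min_comm (v (σ i))]
    exact le_sortedSugeno hn (u := fun i => min (u i) (v i)) i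

end Sugeno

def IsQuasiSugenoWith (hn : 0 < n) (c d : ℝ) (μ : Finset (Fin n) → ℝ) (φ : ℝ → ℝ)
    (f : (Fin n → ℝ) → ℝ) : Prop :=
  ∀ σ : Equiv.Perm (Fin n), ∀ x : Fin n → ℝ, (∀ i, x i ∈ Set.Icc c d) → Monotone (x ∘ σ) →
    f x = sortedSugeno hn μ σ (φ ∘ x)

/-- The vertex `e_S` of the cube `[c,d]ⁿ`. -/
def cubeVertex (c d : ℝ) (S : Finset (Fin n)) : Fin n → ℝ := fun i => if i ∈ S then d else c

def VertexMaxitive (c d : ℝ) (f : (Fin n → ℝ) → ℝ) : Prop :=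
  ∀ x ∈ Set.Icc c d, ∀ S : Finset (Fin n),
    f (fun i => max x (cubeVertex c d S i)) = max (f fun _ => x) (f (cubeVertex c d S))

def VertexMinitive (c d : ℝ) (f : (Fin n → ℝ) → ℝ) : Prop :=
  ∀ x ∈ Set.Icc c d, ∀ S : Finset (Fin n),
    f (fun i => min x (cubeVertex c d S i)) = min (f fun _ => x) (f (cubeVertex c d S))

section Cube

variable {c d : ℝ}

lemma cubeVertex_mem (hcd : c ≤ d) (S : Finset (Fin n)) (i : Fin n) :
    cubeVertex c d S i ∈ Set.Icc c d := by
  unfold cubeVertex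
  split_ifs <;> simp [hcd]

lemma cubeVertex_mono (hcd : c ≤ d) {S T : Finset (Fin n)} (hST : S ⊆ T) (i : Fin n) :
    cubeVertex c d S i ≤ cubeVertex c d T i := by
  by_cases hi : i ∈ S
  · simp [cubeVertex, hi, hST hi]
  · simpa [cubeVertex, hi] using (cubeVertex_mem hcd T i).1

lemma comonotone_const_left (t : ℝ) (y : Fin n → ℝ) : Comonotone (fun _ => t) y :=
  ⟨Tuple.sort y, monotone_const, Tuple.monotone_sort y⟩

lemma comonModularOn_of_maxitive_of_minitive {D : Set ℝ} {f : (Fin n → ℝ) → ℝ}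
    (hmax : ComonMaxitiveOn D f) (hmin : ComonMinitiveOn D f) : ComonModularOn D f :=
  fun x y hx hy hxy => by rw [hmax x y hx hy hxy, hmin x y hx hy hxy, min_add_max]

variable {f : (Fin n → ℝ) → ℝ}

lemma ComonMaxitiveOn.vertexMaxitive (hf : ComonMaxitiveOn (Set.Icc c d) f) (hcd : c ≤ d) :
    VertexMaxitive c d f := fun x hx S =>
  hf _ _ (fun _ => hx) (cubeVertex_mem hcd S) (comonotone_const_left x _)

lemma ComonMinitiveOn.vertexMinitive (hf : ComonMinitiveOn (Set.Icc c d) f) (hcd : c ≤ d) :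
    VertexMinitive c d f := fun x hx S =>
  hf _ _ (fun _ => hx) (cubeVertex_mem hcd S) (comonotone_const_left x _)

lemma ComonModularOn.vertexMaxitive_iff_vertexMinitive (hf : ComonModularOn (Set.Icc c d) f)
    (hcd : c ≤ d) : VertexMaxitive c d f ↔ VertexMinitive c d f := by
  have hsum : ∀ x ∈ Set.Icc c d, ∀ S : Finset (Fin n),
      f (fun i => min x (cubeVertex c d S i)) + f (fun i => max x (cubeVertex c d S i)) =
        min (f fun _ => x) (f (cubeVertex c d S)) + max (f fun _ => x) (f (cubeVertex c d S)) :=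
    fun x hx S => by
      rw [min_add_max]
      exact (hf _ _ (fun _ => hx) (cubeVertex_mem hcd S) (comonotone_const_left x _)).symm
  constructor
  · intro hmax x hx S
    linarith [hsum x hx S, hmax x hx S]
  · intro hmin x hx S
    linarith [hsum x hx S, hmin x hx S]

end Cube

namespace IsQuasiSugenoWith

variable {hn : 0 < n} {a b c d : ℝ} {μ : Finset (Fin n) → ℝ} {φ ψ : ℝ → ℝ}
  {f : (Fin n → ℝ) → ℝ}

lemma congr (hf : IsQuasiSugenoWith hn c d μ φ f) (h : Set.EqOn φ ψ (Set.Icc c d)) :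
    IsQuasiSugenoWith hn c d μ ψ f := fun σ x hx hσ =>
  (hf σ x hx hσ).trans (congrArg (sortedSugeno hn μ σ) (funext fun i => h (hx i)))

lemma apply_const (hf : IsQuasiSugenoWith hn c d μ φ f) (hμ : IsCapacityOn a b μ)
    (hφ : Set.MapsTo φ (Set.Icc c d) (Set.Icc a b)) :
    Set.EqOn (fun y => f fun _ => y) φ (Set.Icc c d) :=
  fun _ hy => (hf 1 _ (fun _ => hy) monotone_const).trans (sortedSugeno_const hn hμ.2.1 (hφ hy).2)

variable (hφm : MonotoneOn φ (Set.Icc c d))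
include hφm

lemma comonMaxitiveOn (hf : IsQuasiSugenoWith hn c d μ φ f) : ComonMaxitiveOn (Set.Icc c d) f :=
  fun x y hx hy ⟨σ, hσx, hσy⟩ => by
    have hxy : ∀ i, max (x i) (y i) ∈ Set.Icc c d := fun i =>
      ⟨le_max_of_le_left (hx i).1, max_le (hx i).2 (hy i).2⟩
    rw [hf σ _ hxy (hσx.max hσy), hf σ x hx hσx, hf σ y hy hσy, ← sortedSugeno_max]
    exact congrArg (sortedSugeno hn μ σ) (funext fun i => hφm.map_max (hx i) (hy i))

lemma comonMinitiveOn (hf : IsQuasiSugenoWith hn c d μ φ f) : ComonMinitiveOn (Set.Icc c d) f :=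
  fun x y hx hy ⟨σ, hσx, hσy⟩ => by
    have hxy : ∀ i, min (x i) (y i) ∈ Set.Icc c d := fun i =>
      ⟨le_min (hx i).1 (hy i).1, min_le_of_left_le (hx i).2⟩
    rw [hf σ _ hxy (hσx.min hσy), hf σ x hx hσx, hf σ y hy hσy,
      ← sortedSugeno_min hn (u := φ ∘ x) (v := φ ∘ y) (fun i j h => hφm (hx _) (hx _) (hσx h))
        (fun i j h => hφm (hy _) (hy _) (hσy h))]
    exact congrArg (sortedSugeno hn μ σ) (funext fun i => hφm.map_min (hx i) (hy i))

variable (hμ : IsCapacityOn a b μ)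
include hμ

lemma eq_sugeno (hf : IsQuasiSugenoWith hn c d μ φ f)
    (hφ : Set.MapsTo φ (Set.Icc c d) (Set.Icc a b)) {x : Fin n → ℝ} (hx : ∀ i, x i ∈ Set.Icc c d) :
    f x = sugeno b μ (φ ∘ x) :=
  (hf _ x hx (Tuple.monotone_sort x)).trans (sortedSugeno_eq_sugeno hn hμ (fun i => (hφ (hx i)).1)
    fun _ _ h => hφm (hx _) (hx _) (Tuple.monotone_sort x h))

lemma nondecreasingOn (hf : IsQuasiSugenoWith hn c d μ φ f)
    (hφ : Set.MapsTo φ (Set.Icc c d) (Set.Icc a b)) : NondecreasingOn (Set.Icc c d) f :=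
  fun x y hx hy hxy => by
    rw [hf.eq_sugeno hφm hμ hφ hx, hf.eq_sugeno hφm hμ hφ hy]
    exact sugeno_mono fun i => hφm (hx i) (hy i) (hxy i)

end IsQuasiSugenoWith

section VertexCapacity

variable {a b c d : ℝ} {f : (Fin n → ℝ) → ℝ}

noncomputable def vertexCapacity (a b c d : ℝ) (f : (Fin n → ℝ) → ℝ) (S : Finset (Fin n)) : ℝ :=
  if S = ∅ then a else if S = Finset.univ then b else f (cubeVertex c d S)

variable (hab : a ≤ b) (hcd : c ≤ d)
  (hfI : ∀ x : Fin n → ℝ, (∀ i, x i ∈ Set.Icc c d) → f x ∈ Set.Icc a b)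
  (hnd : NondecreasingOn (Set.Icc c d) f)

include hab hcd hfI in
lemma vertexCapacity_mem (S : Finset (Fin n)) : vertexCapacity a b c d f S ∈ Set.Icc a b := by
  unfold vertexCapacity
  split_ifs
  · exact ⟨le_rfl, hab⟩
  · exact ⟨hab, le_rfl⟩
  · exact hfI _ (cubeVertex_mem hcd S)

include hab hcd hfI hnd in
lemma isCapacityOn_vertexCapacity (hn : 0 < n) : IsCapacityOn a b (vertexCapacity a b c d f) := by
  have hne : (Finset.univ : Finset (Fin n)) ≠ ∅ := (Finset.univ_nonempty_iff.2 ⟨⟨0, hn⟩⟩).ne_empty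
  refine ⟨if_pos rfl, by simp [vertexCapacity, hne], fun S T hST => ?_⟩
  have hmem := vertexCapacity_mem hab hcd hfI (f := f)
  by_cases hS : S = ∅
  · simpa [vertexCapacity, hS] using (hmem T).1
  by_cases hT : T = Finset.univ
  · simpa [vertexCapacity, hT, hne] using (hmem S).2
  have hT' : T ≠ ∅ := fun h => hS (Finset.subset_empty.1 (h ▸ hST))
  have hS' : S ≠ Finset.univ := fun h => hT (Finset.univ_subset_iff.1 (h ▸ hST))
  simp only [vertexCapacity, hS, hT, hS', hT', if_false]
  exact hnd _ _ (cubeVertex_mem hcd S) (cubeVertex_mem hcd T) (cubeVertex_mono hcd hST)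

include hcd hfI hnd

lemma min_vertexCapacity {S : Finset (Fin n)} (hS : S.Nonempty) {y : ℝ} (hy : y ∈ Set.Icc c d) :
    min (f fun _ => y) (vertexCapacity a b c d f S) =
      min (f fun _ => y) (f (cubeVertex c d S)) := by
  by_cases hSu : S = Finset.univ
  · subst hSu
    have hyd : (f fun _ => y) ≤ f (cubeVertex c d Finset.univ) :=
      hnd _ _ (fun _ => hy) (cubeVertex_mem hcd _) fun i => by simpa [cubeVertex] using hy.2
    simp [vertexCapacity, hS.ne_empty, min_eq_left (hfI _ fun _ => hy).2, min_eq_left hyd]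
  · simp [vertexCapacity, hS.ne_empty, hSu]

lemma max_vertexCapacity {S : Finset (Fin n)} (hS : S ≠ Finset.univ) {y : ℝ}
    (hy : y ∈ Set.Icc c d) :
    max (f fun _ => y) (vertexCapacity a b c d f S) =
      max (f fun _ => y) (f (cubeVertex c d S)) := by
  by_cases hSe : S = ∅
  · subst hSe
    have hcy : f (cubeVertex c d ∅) ≤ f fun _ => y :=
      hnd _ _ (cubeVertex_mem hcd _) (fun _ => hy) fun i => by simpa [cubeVertex] using hy.1
    simp [vertexCapacity, max_eq_left (hfI _ fun _ => hy).1, max_eq_left hcy]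
  · simp [vertexCapacity, hSe, hS]

variable {σ : Equiv.Perm (Fin n)} {x : Fin n → ℝ} (hx : ∀ i, x i ∈ Set.Icc c d)
  (hσ : Monotone (x ∘ σ))
include hx hσ

lemma min_vertexCapacity_SUp_le (hmin : VertexMinitive c d f) (i : Fin n) :
    min (f fun _ => x (σ i)) (vertexCapacity a b c d f (SUp σ i)) ≤ f x := by
  rw [min_vertexCapacity hcd hfI hnd ⟨σ i, apply_mem_SUp i⟩ (hx _), ← hmin _ (hx _)]
  refine hnd _ _ (fun j => ⟨le_min (hx _).1 (cubeVertex_mem hcd _ j).1,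
    min_le_of_left_le (hx _).2⟩) hx fun j => ?_
  by_cases hj : j ∈ SUp σ i
  · exact min_le_of_left_le (le_of_mem_SUp hσ hj)
  · exact min_le_of_right_le (by simpa [cubeVertex, hj] using (hx j).1)

lemma le_max_vertexCapacity_SUp_succ (hmax : VertexMaxitive c d f) (i : Fin n) :
    f x ≤ max (f fun _ => x (σ i)) (vertexCapacity a b c d f (SUp σ ((i : ℕ) + 1))) := by
  have hne : SUp σ ((i : ℕ) + 1) ≠ Finset.univ := fun h =>
    apply_notMem_SUp_succ i (h ▸ Finset.mem_univ (σ i))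
  rw [max_vertexCapacity hcd hfI hnd hne (hx _), ← hmax _ (hx _)]
  refine hnd _ _ hx (fun j => ⟨le_max_of_le_left (hx _).1,
    max_le (hx _).2 (cubeVertex_mem hcd _ j).2⟩) fun j => ?_
  by_cases hj : j ∈ SUp σ ((i : ℕ) + 1)
  · exact le_max_of_le_right (by simpa [cubeVertex, hj] using (hx j).2)
  · exact le_max_of_le_left (le_of_notMem_SUp_succ hσ hj)

omit hx hσ

include hab in
/-- For every `i`, `f(x_{σ(i)}) ∧ μ(S↑(i)) ≤ f x ≤ f(x_{σ(i)}) ∨ μ(S↑(i+1))`; along a chain the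
supremum of the lower bounds reaches the infimum of the upper ones. -/
lemma isQuasiSugenoWith_vertexCapacity (hn : 0 < n) (hmax : VertexMaxitive c d f)
    (hmin : VertexMinitive c d f) :
    IsQuasiSugenoWith hn c d (vertexCapacity a b c d f) (fun y => f fun _ => y) f := by
  intro σ x hx hσ
  set μ := vertexCapacity a b c d f
  have hμ : IsCapacityOn a b μ := isCapacityOn_vertexCapacity hab hcd hfI hnd hn
  have h0 : (f fun _ => x (σ ⟨0, hn⟩)) ≤ μ (SUp σ 0) := by
    rw [SUp_zero, hμ.2.1]
    exact (hfI _ fun _ => hx _).2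
  have ha : a ≤ sortedSugeno hn μ σ ((fun y => f fun _ => y) ∘ x) :=
    (le_min (hfI _ fun _ => hx (σ ⟨0, hn⟩)).1 (vertexCapacity_mem hab hcd hfI (SUp σ 0)).1).trans
      (le_sortedSugeno hn (u := (fun y => f fun _ => y) ∘ x) ⟨0, hn⟩)
  refine le_antisymm ?_ (sortedSugeno_le hn (min_vertexCapacity_SUp_le hcd hfI hnd hx hσ hmin))
  obtain ⟨i, hi⟩ := exists_max_le_max_of_min_le hn _ (fun k => μ (SUp σ k)) _ h0
    (le_sortedSugeno hn (u := (fun y => f fun _ => y) ∘ x))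
  calc f x ≤ _ := le_max_vertexCapacity_SUp_succ hcd hfI hnd hx hσ hmax i
    _ ≤ _ := hi
    _ = _ := by rw [SUp_self, hμ.1, max_eq_left ha]

end VertexCapacity

end QuasiSugeno

open QuasiSugeno in
theorem statement19 (n : ℕ) (hn : 0 < n) (a b c d : ℝ) (hab : a < b) (hcd : c < d)
    (f : (Fin n → ℝ) → ℝ)
    (hfI : ∀ x : Fin n → ℝ, (∀ i, x i ∈ Set.Icc c d) → f x ∈ Set.Icc a b) :
    ((∃ μ : Finset (Fin n) → ℝ, IsCapacityOn a b μ ∧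
        (∀ y ∈ Set.Icc c d, ∀ z ∈ Set.Icc c d, y ≤ z →
          f (fun _ => y) ≤ f (fun _ => z)) ∧
        ∀ σ : Equiv.Perm (Fin n), ∀ x : Fin n → ℝ,
          (∀ i, x i ∈ Set.Icc c d) → Monotone (x ∘ σ) →
          f x = Finset.sup' Finset.univ ⟨⟨0, hn⟩, Finset.mem_univ _⟩
            (fun i : Fin n => min (f (fun _ => x (σ i))) (μ (SUp σ (i : ℕ)))))
      ↔
      (∃ μ : Finset (Fin n) → ℝ, ∃ φ : ℝ → ℝ, IsCapacityOn a b μ ∧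
        (∀ y ∈ Set.Icc c d, ∀ z ∈ Set.Icc c d, y ≤ z → φ y ≤ φ z) ∧
        (∀ y ∈ Set.Icc c d, φ y ∈ Set.Icc a b) ∧
        ∀ σ : Equiv.Perm (Fin n), ∀ x : Fin n → ℝ,
          (∀ i, x i ∈ Set.Icc c d) → Monotone (x ∘ σ) →
          f x = Finset.sup' Finset.univ ⟨⟨0, hn⟩, Finset.mem_univ _⟩
            (fun i : Fin n => min (φ (x (σ i))) (μ (SUp σ (i : ℕ))))))
    ∧
    ((∃ μ : Finset (Fin n) → ℝ, IsCapacityOn a b μ ∧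
        (∀ y ∈ Set.Icc c d, ∀ z ∈ Set.Icc c d, y ≤ z →
          f (fun _ => y) ≤ f (fun _ => z)) ∧
        ∀ σ : Equiv.Perm (Fin n), ∀ x : Fin n → ℝ,
          (∀ i, x i ∈ Set.Icc c d) → Monotone (x ∘ σ) →
          f x = Finset.sup' Finset.univ ⟨⟨0, hn⟩, Finset.mem_univ _⟩
            (fun i : Fin n => min (f (fun _ => x (σ i))) (μ (SUp σ (i : ℕ)))))
      ↔
      (ComonModularOn (Set.Icc c d) f ∧ NondecreasingOn (Set.Icc c d) f ∧
        ((∀ x ∈ Set.Icc c d, ∀ S : Finset (Fin n),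
            f (fun i => max x (if i ∈ S then d else c)) =
              max (f (fun _ => x)) (f (fun i => if i ∈ S then d else c))) ∨
          (∀ x ∈ Set.Icc c d, ∀ S : Finset (Fin n),
            f (fun i => min x (if i ∈ S then d else c)) =
              min (f (fun _ => x)) (f (fun i => if i ∈ S then d else c))))))
    ∧
    ((∃ μ : Finset (Fin n) → ℝ, IsCapacityOn a b μ ∧
        (∀ y ∈ Set.Icc c d, ∀ z ∈ Set.Icc c d, y ≤ z →
          f (fun _ => y) ≤ f (fun _ => z)) ∧
        ∀ σ : Equiv.Perm (Fin n), ∀ x : Fin n → ℝ,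
          (∀ i, x i ∈ Set.Icc c d) → Monotone (x ∘ σ) →
          f x = Finset.sup' Finset.univ ⟨⟨0, hn⟩, Finset.mem_univ _⟩
            (fun i : Fin n => min (f (fun _ => x (σ i))) (μ (SUp σ (i : ℕ)))))
      ↔
      (NondecreasingOn (Set.Icc c d) f ∧
        (∀ x ∈ Set.Icc c d, ∀ S : Finset (Fin n),
          f (fun i => max x (if i ∈ S then d else c)) =
            max (f (fun _ => x)) (f (fun i => if i ∈ S then d else c))) ∧
        (∀ x ∈ Set.Icc c d, ∀ S : Finset (Fin n),
          f (fun i => min x (if i ∈ S then d else c)) =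
            min (f (fun _ => x)) (f (fun i => if i ∈ S then d else c))))) := by
  have hφ₀ : Set.MapsTo (fun y => f fun _ => y) (Set.Icc c d) (Set.Icc a b) :=
    fun _ hy => hfI _ fun _ => hy
  have props : ∀ μ, IsCapacityOn a b μ → MonotoneOn (fun y => f fun _ => y) (Set.Icc c d) →
      IsQuasiSugenoWith hn c d μ (fun y => f fun _ => y) f →
      NondecreasingOn (Set.Icc c d) f ∧ ComonMaxitiveOn (Set.Icc c d) f ∧
        ComonMinitiveOn (Set.Icc c d) f := fun μ hμ hmono hrep =>
    ⟨hrep.nondecreasingOn hmono hμ hφ₀, hrep.comonMaxitiveOn hmono, hrep.comonMinitiveOn hmono⟩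
  have back (hnd : NondecreasingOn (Set.Icc c d) f) (hmax : VertexMaxitive c d f)
      (hmin : VertexMinitive c d f) : ∃ μ, IsCapacityOn a b μ ∧
        MonotoneOn (fun y => f fun _ => y) (Set.Icc c d) ∧
        IsQuasiSugenoWith hn c d μ (fun y => f fun _ => y) f :=
    ⟨_, isCapacityOn_vertexCapacity hab.le hcd.le hfI hnd hn,
      fun _ hy _ hz h => hnd _ _ (fun _ => hy) (fun _ => hz) fun _ => h,
      isQuasiSugenoWith_vertexCapacity hab.le hcd.le hfI hnd hn hmax hmin⟩
  refine ⟨⟨?_, ?_⟩, ⟨?_, ?_⟩, ⟨?_, ?_⟩⟩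
  · rintro ⟨μ, hμ, hmono, hrep⟩
    exact ⟨μ, _, hμ, hmono, hφ₀, hrep⟩
  · rintro ⟨μ, φ, hμ, hφ, hφI, hrep⟩
    have hrep : IsQuasiSugenoWith hn c d μ φ f := hrep
    have hconst := hrep.apply_const hμ hφI
    exact ⟨μ, hμ,
      fun y hy z hz h => (hconst hy).trans_le ((hφ y hy z hz h).trans_eq (hconst hz).symm),
      hrep.congr hconst.symm⟩
  · rintro ⟨μ, hμ, hmono, hrep⟩
    obtain ⟨hnd, hmax, hmin⟩ := props μ hμ hmono hrep
    exact ⟨comonModularOn_of_maxitive_of_minitive hmax hmin, hnd,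
      Or.inl (hmax.vertexMaxitive hcd.le)⟩
  · rintro ⟨hmod, hnd, hmax | hmin⟩
    · exact back hnd hmax ((hmod.vertexMaxitive_iff_vertexMinitive hcd.le).1 hmax)
    · exact back hnd ((hmod.vertexMaxitive_iff_vertexMinitive hcd.le).2 hmin) hmin
  · rintro ⟨μ, hμ, hmono, hrep⟩
    obtain ⟨hnd, hmax, hmin⟩ := props μ hμ hmono hrep
    exact ⟨hnd, hmax.vertexMaxitive hcd.le, hmin.vertexMinitive hcd.le⟩
  · rintro ⟨hnd, hmax, hmin⟩
    exact back hnd hmax hmin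
end
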